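/- Let A be a commutative semiring. Then every element of A has an additive inverse (i.e., A is a ring) if and only if there exists no semiring homomorphism from A to the Boolean semiring 𝔹. -/
import Mathlib


/-- The Boolean semiring `𝔹 = {0, 1}` with `1 + 1 = 1`: addition is logical
`or` and multiplication is logical `and`. -/
inductive BoolSR : Type
  | zero : BoolSR
  | one : BoolSR
deriving DecidableEq

namespace BoolSR

/-- Addition on `𝔹` is logical `or`. -/
def add : BoolSR → BoolSR → BoolSR
  | zero, b => b
  | one, _ => one

/-- Multiplication on `𝔹` is logical `and`. -/
def mul : BoolSR → BoolSR → BoolSR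
  | zero, _ => zero
  | one, b => b

instance : Zero BoolSR := ⟨zero⟩
instance : One BoolSR := ⟨one⟩
instance : Add BoolSR := ⟨add⟩
instance : Mul BoolSR := ⟨mul⟩

instance : CommSemiring BoolSR where
  add_assoc a b c := by cases a <;> cases b <;> cases c <;> rfl
  zero_add a := by cases a <;> rfl
  add_zero a := by cases a <;> rfl
  add_comm a b := by cases a <;> cases b <;> rfl
  mul_assoc a b c := by cases a <;> cases b <;> cases c <;> rfl
  one_mul a := by cases a <;> rfl
  mul_one a := by cases a <;> rfl
  mul_comm a b := by cases a <;> cases b <;> rfl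
  left_distrib a b c := by cases a <;> cases b <;> cases c <;> rfl
  right_distrib a b c := by cases a <;> cases b <;> cases c <;> rfl
  zero_mul a := rfl
  mul_zero a := by cases a <;> rfl
  nsmul := nsmulRec
  npow := npowRec

end BoolSR

/-- A commutative semiring `A` is a ring (every element has an additive
inverse) if and only if there is no semiring homomorphism `A → 𝔹`. -/
theorem isRing_iff_no_hom_to_boolSR (A : Type*) [CommSemiring A] :
    (∀ a : A, ∃ b, a + b = 0) ↔ IsEmpty (A →+* BoolSR) := by
  constructor
  · intro h
    constructor
    intro f
    obtain ⟨b, hb⟩ := h 1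
    have h1 : (1 : BoolSR) + f b = 0 := by
      rw [← map_one f, ← map_add, hb, map_zero]
    cases hfb : f b <;> rw [hfb] at h1 <;> exact absurd h1 (by decide)
  · intro hE
    by_contra h
    push_neg at h
    obtain ⟨a₀, ha₀⟩ := h
    -- the collection of proper saturated ideals
    set C : Set (Set A) := {I : Set A | (0:A) ∈ I ∧ (∀ x ∈ I, ∀ y ∈ I, x + y ∈ I) ∧
      (∀ r : A, ∀ x ∈ I, r * x ∈ I) ∧ (∀ x y : A, x + y ∈ I → x ∈ I) ∧ (1:A) ∉ I} with hC
    have hSC : {x : A | ∃ y, x + y = 0} ∈ C := by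
      simp only [hC, Set.mem_setOf_eq]
      refine ⟨⟨0, by simp⟩, ?_, ?_, ?_, ?_⟩
      · rintro x ⟨x', hx⟩ y ⟨y', hy⟩
        exact ⟨x' + y', by rw [show x + y + (x' + y') = (x + x') + (y + y') by ring, hx, hy,
          add_zero]⟩
      · rintro r x ⟨x', hx⟩
        exact ⟨r * x', by rw [← mul_add, hx, mul_zero]⟩
      · rintro x y ⟨z, hz⟩
        exact ⟨y + z, by rw [← add_assoc, hz]⟩
      · rintro ⟨y, hy⟩
        exact ha₀ (a₀ * y) (by rw [show a₀ + a₀ * y = a₀ * (1 + y) by ring, hy, mul_zero])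
    obtain ⟨M, -, hMC, hMmax⟩ := zorn_subset_nonempty C (fun c hcC hchain hcne => by
      obtain ⟨I₀, hI₀⟩ := hcne
      simp only [hC, Set.mem_setOf_eq] at hcC ⊢
      refine ⟨⋃₀ c, ⟨?_, ?_, ?_, ?_, ?_⟩, fun s hs => Set.subset_sUnion_of_mem hs⟩
      · exact ⟨I₀, hI₀, (hcC hI₀).1⟩
      · rintro x ⟨I, hI, hxI⟩ y ⟨J, hJ, hyJ⟩
        rcases hchain.total hI hJ with hIJ | hJI
        · exact ⟨J, hJ, (hcC hJ).2.1 x (hIJ hxI) y hyJ⟩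
        · exact ⟨I, hI, (hcC hI).2.1 x hxI y (hJI hyJ)⟩
      · rintro r x ⟨I, hI, hxI⟩
        exact ⟨I, hI, (hcC hI).2.2.1 r x hxI⟩
      · rintro x y ⟨I, hI, hxyI⟩
        exact ⟨I, hI, (hcC hI).2.2.2.1 x y hxyI⟩
      · rintro ⟨I, hI, h1I⟩
        exact (hcC hI).2.2.2.2 h1I) _ hSC
    simp only [hC, Set.mem_setOf_eq] at hMC
    obtain ⟨hM0, hMadd, hMsmul, hMsat, hM1⟩ := hMC
    -- key: for x ∉ M, 1 is in the saturation of M + Ax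
    have key : ∀ x : A, x ∉ M → ∃ c m r : A, m ∈ M ∧ 1 + c = m + r * x := by
      intro x hx
      by_contra hno
      push_neg at hno
      set I' : Set A := {a : A | ∃ c m r : A, m ∈ M ∧ a + c = m + r * x} with hI'
      have hI'C : I' ∈ C := by
        simp only [hC, Set.mem_setOf_eq]
        refine ⟨⟨0, 0, 0, hM0, by ring⟩, ?_, ?_, ?_, ?_⟩
        · rintro a ⟨c, m, r, hm, hac⟩ b ⟨c', m', r', hm', hbc⟩
          refine ⟨c + c', m + m', r + r', hMadd _ hm _ hm', ?_⟩
          rw [show a + b + (c + c') = (a + c) + (b + c') by ring, hac, hbc]; ring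
        · rintro s a ⟨c, m, r, hm, hac⟩
          refine ⟨s * c, s * m, s * r, hMsmul _ _ hm, ?_⟩
          rw [← mul_add, hac]; ring
        · rintro a b ⟨c, m, r, hm, hac⟩
          exact ⟨b + c, m, r, hm, by rw [← add_assoc, hac]⟩
        · rintro ⟨c, m, r, hm, h1c⟩
          exact hno c m r hm h1c
      have hMI' : M ⊆ I' := fun m hm => ⟨0, m, 0, hm, by ring⟩
      have := hMmax hI'C hMI'
      exact hx (this ⟨0, 0, 1, hM0, by ring⟩)
    -- M is prime: complement is multiplicatively closed
    have hprime : ∀ x y : A, x ∉ M → y ∉ M → x * y ∉ M := by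
      intro x y hx hy hxy
      obtain ⟨c, m, r, hm, hcx⟩ := key x hx
      obtain ⟨c', m', r', hm', hcy⟩ := key y hy
      have hprod : (1 + c) * (1 + c') = m * m' + m * (r' * y) + r * x * m'
          + (r * r') * (x * y) := by rw [hcx, hcy]; ring
      have hmem : m * m' + m * (r' * y) + r * x * m'
          + (r * r') * (x * y) ∈ M := by
        refine hMadd _ (hMadd _ (hMadd _ ?_ _ ?_) _ ?_) _ ?_
        · exact hMsmul m m' hm'
        · rw [mul_comm]; exact hMsmul _ _ hm
        · exact hMsmul _ _ hm'
        · exact hMsmul _ _ hxy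
      rw [← hprod] at hmem
      have h1m : (1 : A) + (c + c' + c * c') ∈ M := by
        rw [show (1:A) + (c + c' + c * c') = (1 + c) * (1 + c') by ring]; exact hmem
      exact hM1 (hMsat _ _ h1m)
    -- build the homomorphism
    classical
    refine hE.false ⟨⟨⟨fun a => if a ∈ M then (0 : BoolSR) else 1, by simp [hM1]⟩, ?_⟩,
      by simp [hM0], ?_⟩
    · intro x y
      simp only [OneHom.coe_mk]
      by_cases hx : x ∈ M <;> by_cases hy : y ∈ M <;>
        simp only [hx, hy, if_true, if_false]
      · rw [if_pos (hMsmul x y hy)]; decide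
      · rw [if_pos (mul_comm x y ▸ hMsmul y x hx)]; decide
      · rw [if_pos (hMsmul x y hy)]; decide
      · rw [if_neg (hprime x y hx hy)]; decide
    · intro x y
      simp only [OneHom.coe_mk, MonoidHom.coe_mk]
      by_cases hx : x ∈ M <;> by_cases hy : y ∈ M <;>
        simp only [hx, hy, if_true, if_false]
      · rw [if_pos (hMadd x hx y hy)]; decide
      · rw [if_neg (fun hxy => hy (hMsat y x (add_comm x y ▸ hxy)))]; decide
      · rw [if_neg (fun hxy => hx (hMsat x y hxy))]; decide
      · rw [if_neg (fun hxy => hx (hMsat x y hxy))]; decide
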